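/- Suppose the metrics g and ĝ on U satisfy g = ĝλ for a smooth matrix-valued field λ, P is a g-orthogonal projection, and the kinetic-energy matching condition P(∇_X X − ∇̂_X X) = 0 holds at every point of U for every smooth vector field X (∇, ∇̂ the covariant derivatives of g, ĝ). Then for all smooth vector fields X and Z on U, g(∇_Z(λPX), PX) − g(λPX, ∇_Z(PX)) = 0 at every point of U, where λPX denotes the vector field with components λ^i_j P^j_k X^k and g(Y,W) = g_{ij} Y^i W^j. -/

import Mathlib

/-!
Statement 0 (Proposition 1 of Auckly–Kapitanski–White): if `g = ĝ λ` and the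
kinetic-energy matching condition `P(∇_X X − ∇̂_X X) = 0` holds on `U`, then
`g(∇_Z (λPX), PX) − g(λPX, ∇_Z (PX)) = 0` on `U` for all smooth `X, Z`.
Everything is written in local coordinates on an open set `U ⊆ ℝⁿ`.
-/

noncomputable section

open Matrix

/-- Partial derivative of a scalar function in the `i`-th coordinate direction. -/
def pderiv' {n : ℕ} (f : (Fin n → ℝ) → ℝ) (i : Fin n) (x : Fin n → ℝ) : ℝ :=
  fderiv ℝ f x (Pi.single i 1)

/-- Christoffel symbols `Γ^k_{ij}` of a metric `g`. -/
def christoffel {n : ℕ} (g : (Fin n → ℝ) → Matrix (Fin n) (Fin n) ℝ)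
    (k i j : Fin n) (x : Fin n → ℝ) : ℝ :=
  (1 / 2) * ∑ l, (g x)⁻¹ k l *
    (pderiv' (fun y => g y j l) i x + pderiv' (fun y => g y i l) j x -
      pderiv' (fun y => g y i j) l x)

/-- Covariant derivative `(∇_X Y)^k` of the vector field `Y` along `X`. -/
def covDeriv' {n : ℕ} (g : (Fin n → ℝ) → Matrix (Fin n) (Fin n) ℝ)
    (X Y : (Fin n → ℝ) → Fin n → ℝ) (x : Fin n → ℝ) (k : Fin n) : ℝ :=
  (∑ i, X x i * pderiv' (fun y => Y y k) i x) +
    ∑ i, ∑ j, christoffel g k i j x * X x i * Y x j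

/-- Pointwise application of a matrix-valued field to a vector field. -/
def mvec {n : ℕ} (A : (Fin n → ℝ) → Matrix (Fin n) (Fin n) ℝ)
    (X : (Fin n → ℝ) → Fin n → ℝ) (x : Fin n → ℝ) (i : Fin n) : ℝ :=
  ∑ j, A x i j * X x j

/-- Inner product `g(X, Y) = g_{ij} X^i Y^j` of two vector fields. -/
def gip {n : ℕ} (g : (Fin n → ℝ) → Matrix (Fin n) (Fin n) ℝ)
    (X Y : (Fin n → ℝ) → Fin n → ℝ) (x : Fin n → ℝ) : ℝ :=
  ∑ i, ∑ j, g x i j * X x i * Y x j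

/-!
Write `Y = PX` and `W = λY`. Since `g = ĝλ`, the functions `g(W, Y)` and `ĝ(W, W)` agree on `U`,
so differentiating both along `Z` with the metric compatibility of `∇` and `∇̂` gives
`g(∇_Z W, Y) + g(W, ∇_Z Y) = 2 ĝ(∇̂_Z W, W)`. On constant fields `X = v` the matching condition
says that the symmetric form `P(Γ - Γ̂)(v, v)` vanishes; polarizing gives `P(Γ - Γ̂) = 0`, hence
`P ∇̂_Z W = P ∇_Z W`. As `P` is a `g`-orthogonal projection and `λY = W`, this yields
`ĝ(∇̂_Z W, W) = g(P ∇̂_Z W, Y) = g(∇_Z W, Y)`.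
-/

namespace Matrix

variable {ι κ R : Type*} [Fintype ι] [Fintype κ]

theorem sum_sum_mul_eq_dotProduct_mulVec [CommSemiring R] (M : Matrix ι κ R) (u : ι → R)
    (v : κ → R) : ∑ i, ∑ j, M i j * u i * v j = u ⬝ᵥ M *ᵥ v := by
  simp only [dotProduct, mulVec, Finset.mul_sum]
  exact Finset.sum_congr rfl fun i _ => Finset.sum_congr rfl fun j _ => by ring

theorem IsSymm.eq_zero_of_forall_dotProduct_mulVec_self [DecidableEq ι] [CommRing R]
    [NoZeroDivisors R] [NeZero (2 : R)] {S : Matrix ι ι R} (hS : S.IsSymm)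
    (h : ∀ v, v ⬝ᵥ S *ᵥ v = 0) : S = 0 := by
  have hdiag (i : ι) : S i i = 0 := by
    simpa [mulVec_single_one, single_one_dotProduct] using h (Pi.single i 1)
  ext i j
  have hij := h (Pi.single i 1 + Pi.single j 1)
  simp only [mulVec_add, dotProduct_add, add_dotProduct, mulVec_single_one,
    single_one_dotProduct, col_apply, hS.apply, hdiag] at hij
  simpa [← two_mul, two_ne_zero] using hij

theorem proj_dotProduct_mulVec_proj [CommRing R] {G P : Matrix ι ι R} (hPP : P * P = P)
    (hGP : (G * P)ᵀ = G * P) (u y : ι → R) :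
    (P *ᵥ u) ⬝ᵥ G *ᵥ (P *ᵥ y) = u ⬝ᵥ G *ᵥ (P *ᵥ y) := by
  have hP (v : ι → R) : P *ᵥ (P *ᵥ v) = P *ᵥ v := by rw [mulVec_mulVec, hPP]
  have h (v : ι → R) : v ⬝ᵥ G *ᵥ (P *ᵥ y) = (P *ᵥ y) ⬝ᵥ (G * P) *ᵥ v := by
    rw [← dotProduct_transpose_mulVec (G * P), hGP, ← mulVec_mulVec, hP]
  rw [h, h, ← mulVec_mulVec, ← mulVec_mulVec, hP]

end Matrix

variable {n : ℕ}

section PartialDerivatives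

theorem pderiv'_congr {f h : (Fin n → ℝ) → ℝ} {x : Fin n → ℝ} (hfh : f =ᶠ[nhds x] h)
    (i : Fin n) : pderiv' f i x = pderiv' h i x := by
  rw [pderiv', pderiv', hfh.fderiv_eq]

theorem pderiv'_sum {ι : Type*} (s : Finset ι) {f : ι → (Fin n → ℝ) → ℝ} {x : Fin n → ℝ}
    (hf : ∀ i ∈ s, DifferentiableAt ℝ (f i) x) (l : Fin n) :
    pderiv' (fun y => ∑ i ∈ s, f i y) l x = ∑ i ∈ s, pderiv' (f i) l x := by
  simp [pderiv', fderiv_fun_sum hf]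

theorem pderiv'_mul {f h : (Fin n → ℝ) → ℝ} {x : Fin n → ℝ} (hf : DifferentiableAt ℝ f x)
    (hh : DifferentiableAt ℝ h x) (l : Fin n) :
    pderiv' (fun y => f y * h y) l x = pderiv' f l x * h x + f x * pderiv' h l x := by
  simp [pderiv', fderiv_fun_mul hf hh]
  ring

def pderivField (A : (Fin n → ℝ) → Fin n → ℝ) (l : Fin n) (x : Fin n → ℝ) : Fin n → ℝ :=
  fun k => pderiv' (fun y => A y k) l x

def pderivMatrix (g : (Fin n → ℝ) → Matrix (Fin n) (Fin n) ℝ) (l : Fin n) (x : Fin n → ℝ) :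
    Matrix (Fin n) (Fin n) ℝ :=
  Matrix.of fun i j => pderiv' (fun y => g y i j) l x

end PartialDerivatives

section VectorFields

theorem mvec_apply (A : (Fin n → ℝ) → Matrix (Fin n) (Fin n) ℝ) (X : (Fin n → ℝ) → Fin n → ℝ)
    (x : Fin n → ℝ) : mvec A X x = A x *ᵥ X x :=
  rfl

theorem contDiffOn_mvec {m : WithTop ℕ∞} {U : Set (Fin n → ℝ)}
    {A : (Fin n → ℝ) → Matrix (Fin n) (Fin n) ℝ} {X : (Fin n → ℝ) → Fin n → ℝ}
    (hA : ∀ i j, ContDiffOn ℝ m (fun x => A x i j) U)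
    (hX : ∀ k, ContDiffOn ℝ m (fun x => X x k) U) (k : Fin n) :
    ContDiffOn ℝ m (fun x => mvec A X x k) U :=
  ContDiffOn.sum fun j _ => (hA k j).mul (hX j)

theorem gip_eq_dotProduct_mulVec (g : (Fin n → ℝ) → Matrix (Fin n) (Fin n) ℝ)
    (A B : (Fin n → ℝ) → Fin n → ℝ) (x : Fin n → ℝ) : gip g A B x = A x ⬝ᵥ g x *ᵥ B x :=
  Matrix.sum_sum_mul_eq_dotProduct_mulVec _ _ _

theorem gip_comm {g : (Fin n → ℝ) → Matrix (Fin n) (Fin n) ℝ} {x : Fin n → ℝ}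
    (hsymm : (g x).IsSymm) (A B : (Fin n → ℝ) → Fin n → ℝ) : gip g A B x = gip g B A x := by
  rw [gip_eq_dotProduct_mulVec, gip_eq_dotProduct_mulVec, ← dotProduct_transpose_mulVec, hsymm]

theorem gip_eq_gip_mvec {g gh lam : (Fin n → ℝ) → Matrix (Fin n) (Fin n) ℝ} {x : Fin n → ℝ}
    (hglam : g x = gh x * lam x) (A B : (Fin n → ℝ) → Fin n → ℝ) :
    gip g A B x = gip gh A (mvec lam B) x := by
  rw [gip_eq_dotProduct_mulVec, gip_eq_dotProduct_mulVec, mvec_apply, hglam, mulVec_mulVec]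

theorem gip_mvec_eq_of_proj {g gh lam P : (Fin n → ℝ) → Matrix (Fin n) (Fin n) ℝ}
    {x : Fin n → ℝ} (hglam : g x = gh x * lam x) (hPP : P x * P x = P x)
    (hPsym : (g x * P x)ᵀ = g x * P x) {V V' : (Fin n → ℝ) → Fin n → ℝ}
    (hV : P x *ᵥ V x = P x *ᵥ V' x) (X : (Fin n → ℝ) → Fin n → ℝ) :
    gip gh V (mvec lam (mvec P X)) x = gip g V' (mvec P X) x := by
  rw [← gip_eq_gip_mvec hglam, gip_eq_dotProduct_mulVec, gip_eq_dotProduct_mulVec, mvec_apply P,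
    ← Matrix.proj_dotProduct_mulVec_proj hPP hPsym, hV,
    Matrix.proj_dotProduct_mulVec_proj hPP hPsym]

theorem pderiv'_gip {g : (Fin n → ℝ) → Matrix (Fin n) (Fin n) ℝ} {A B : (Fin n → ℝ) → Fin n → ℝ}
    {x : Fin n → ℝ} (hg : ∀ i j, DifferentiableAt ℝ (fun y => g y i j) x)
    (hA : ∀ i, DifferentiableAt ℝ (fun y => A y i) x)
    (hB : ∀ i, DifferentiableAt ℝ (fun y => B y i) x) (l : Fin n) :
    pderiv' (gip g A B) l x = A x ⬝ᵥ pderivMatrix g l x *ᵥ B x +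
      pderivField A l x ⬝ᵥ g x *ᵥ B x + A x ⬝ᵥ g x *ᵥ pderivField B l x := by
  have hgA i j : DifferentiableAt ℝ (fun y => g y i j * A y i) x := (hg i j).mul (hA i)
  have hgAB i j : DifferentiableAt ℝ (fun y => g y i j * A y i * B y j) x := (hgA i j).mul (hB j)
  simp only [← Matrix.sum_sum_mul_eq_dotProduct_mulVec, ← Finset.sum_add_distrib]
  unfold gip
  rw [pderiv'_sum _ (fun i _ => DifferentiableAt.fun_sum fun j _ => hgAB i j)]
  refine Finset.sum_congr rfl fun i _ => ?_
  rw [pderiv'_sum _ (fun j _ => hgAB i j)]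
  refine Finset.sum_congr rfl fun j _ => ?_
  rw [pderiv'_mul (hgA i j) (hB j), pderiv'_mul (hg i j) (hA i)]
  simp only [pderivMatrix, pderivField, Matrix.of_apply]
  ring

end VectorFields

section Christoffel

def christoffelMatrix (g : (Fin n → ℝ) → Matrix (Fin n) (Fin n) ℝ) (l : Fin n)
    (x : Fin n → ℝ) : Matrix (Fin n) (Fin n) ℝ :=
  Matrix.of fun k m => christoffel g k l m x

variable {g : (Fin n → ℝ) → Matrix (Fin n) (Fin n) ℝ} {x : Fin n → ℝ}

theorem pderiv'_swap_of_isSymm (hsymm : ∀ᶠ y in nhds x, (g y).IsSymm) (i j l : Fin n) :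
    pderiv' (fun y => g y i j) l x = pderiv' (fun y => g y j i) l x :=
  pderiv'_congr (hsymm.mono fun _ hy => congrFun (congrFun hy j) i) l

theorem christoffel_comm (hsymm : ∀ᶠ y in nhds x, (g y).IsSymm) (k i j : Fin n) :
    christoffel g k i j x = christoffel g k j i x := by
  simp only [christoffel, pderiv'_swap_of_isSymm hsymm i j, add_comm]

theorem mul_christoffelMatrix_apply (hdet : IsUnit (g x).det) (l m j : Fin n) :
    (g x * christoffelMatrix g l x) m j = (1 / 2) * (pderiv' (fun y => g y j m) l x +
      pderiv' (fun y => g y l m) j x - pderiv' (fun y => g y l j) m x) := by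
  have hΓ : christoffelMatrix g l x = (1 / 2 : ℝ) • ((g x)⁻¹ * Matrix.of fun q j =>
      pderiv' (fun y => g y j q) l x + pderiv' (fun y => g y l q) j x -
        pderiv' (fun y => g y l j) q x) := by
    ext k j
    simp [christoffelMatrix, christoffel, Matrix.mul_apply]
  rw [hΓ, Matrix.mul_smul, ← Matrix.mul_assoc, Matrix.mul_nonsing_inv _ hdet, Matrix.one_mul]
  simp

theorem pderivMatrix_eq_transpose_mul_add_mul (hsymm : ∀ᶠ y in nhds x, (g y).IsSymm)
    (hdet : IsUnit (g x).det) (l : Fin n) :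
    pderivMatrix g l x = (christoffelMatrix g l x)ᵀ * g x + g x * christoffelMatrix g l x := by
  have hgx : (g x)ᵀ = g x := hsymm.self_of_nhds
  ext i j
  rw [Matrix.add_apply, ← hgx, ← Matrix.transpose_mul, hgx, Matrix.transpose_apply,
    mul_christoffelMatrix_apply hdet, mul_christoffelMatrix_apply hdet,
    pderiv'_swap_of_isSymm hsymm j i]
  simp only [pderivMatrix, Matrix.of_apply]
  ring

theorem covDeriv'_eq_sum_smul (Z A : (Fin n → ℝ) → Fin n → ℝ) :
    covDeriv' g Z A x = ∑ l, Z x l • (pderivField A l x + christoffelMatrix g l x *ᵥ A x) := by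
  ext k
  simp [covDeriv', pderivField, christoffelMatrix, mulVec, dotProduct, Finset.sum_apply,
    Finset.sum_add_distrib, Finset.mul_sum, mul_assoc, mul_left_comm]

theorem gip_covDeriv'_add_gip_covDeriv' (hsymm : ∀ᶠ y in nhds x, (g y).IsSymm)
    (hdet : IsUnit (g x).det) (hg : ∀ i j, DifferentiableAt ℝ (fun y => g y i j) x)
    {A B : (Fin n → ℝ) → Fin n → ℝ} (hA : ∀ i, DifferentiableAt ℝ (fun y => A y i) x)
    (hB : ∀ i, DifferentiableAt ℝ (fun y => B y i) x) (Z : (Fin n → ℝ) → Fin n → ℝ) :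
    gip g (covDeriv' g Z A) B x + gip g A (covDeriv' g Z B) x =
      ∑ l, Z x l * pderiv' (gip g A B) l x := by
  simp only [gip_eq_dotProduct_mulVec, covDeriv'_eq_sum_smul, sum_dotProduct, mulVec_sum,
    dotProduct_sum, smul_dotProduct, mulVec_smul, dotProduct_smul, smul_eq_mul,
    ← Finset.sum_add_distrib, ← mul_add, pderiv'_gip hg hA hB,
    pderivMatrix_eq_transpose_mul_add_mul hsymm hdet]
  refine Finset.sum_congr rfl fun l _ => congrArg _ ?_
  simp only [add_dotProduct, mulVec_add, dotProduct_add, add_mulVec, ← mulVec_mulVec,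
    dotProduct_transpose_mulVec, dotProduct_comm (christoffelMatrix g l x *ᵥ A x)]
  ring

end Christoffel

section Matching

def projChristoffelDiff (P g gh : (Fin n → ℝ) → Matrix (Fin n) (Fin n) ℝ) (x : Fin n → ℝ)
    (k : Fin n) : Matrix (Fin n) (Fin n) ℝ :=
  Matrix.of fun i j => ∑ m, P x k m * (christoffel g m i j x - christoffel gh m i j x)

variable {P g gh : (Fin n → ℝ) → Matrix (Fin n) (Fin n) ℝ} {x : Fin n → ℝ}

theorem mulVec_covDeriv'_sub_covDeriv'_apply (X Y : (Fin n → ℝ) → Fin n → ℝ) (k : Fin n) :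
    (P x *ᵥ (covDeriv' g X Y x - covDeriv' gh X Y x)) k =
      X x ⬝ᵥ projChristoffelDiff P g gh x k *ᵥ Y x := by
  rw [← Matrix.sum_sum_mul_eq_dotProduct_mulVec]
  simp only [mulVec, dotProduct, Pi.sub_apply, covDeriv', add_sub_add_left_eq_sub,
    ← Finset.sum_sub_distrib, Finset.mul_sum, projChristoffelDiff, Matrix.of_apply,
    Finset.sum_mul]
  rw [Finset.sum_comm]
  refine Finset.sum_congr rfl fun i _ => ?_
  rw [Finset.sum_comm]
  exact Finset.sum_congr rfl fun j _ => Finset.sum_congr rfl fun m _ => by ring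

theorem projChristoffelDiff_eq_zero (hsymm : ∀ᶠ y in nhds x, (g y).IsSymm)
    (hsymm' : ∀ᶠ y in nhds x, (gh y).IsSymm)
    (hmatch : ∀ v : Fin n → ℝ, P x *ᵥ
      (covDeriv' g (fun _ => v) (fun _ => v) x - covDeriv' gh (fun _ => v) (fun _ => v) x) = 0)
    (k : Fin n) : projChristoffelDiff P g gh x k = 0 := by
  refine Matrix.IsSymm.eq_zero_of_forall_dotProduct_mulVec_self ?_ fun v => ?_
  · ext i j
    simp [projChristoffelDiff, christoffel_comm hsymm _ i j, christoffel_comm hsymm' _ i j]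
  · rw [← mulVec_covDeriv'_sub_covDeriv'_apply (fun _ => v) (fun _ => v), hmatch, Pi.zero_apply]

theorem mulVec_covDeriv'_eq_of_matching (hsymm : ∀ᶠ y in nhds x, (g y).IsSymm)
    (hsymm' : ∀ᶠ y in nhds x, (gh y).IsSymm)
    (hmatch : ∀ v : Fin n → ℝ, P x *ᵥ
      (covDeriv' g (fun _ => v) (fun _ => v) x - covDeriv' gh (fun _ => v) (fun _ => v) x) = 0)
    (Z V : (Fin n → ℝ) → Fin n → ℝ) :
    P x *ᵥ covDeriv' g Z V x = P x *ᵥ covDeriv' gh Z V x := by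
  refine sub_eq_zero.1 ?_
  ext k
  rw [← mulVec_sub, mulVec_covDeriv'_sub_covDeriv'_apply,
    projChristoffelDiff_eq_zero hsymm hsymm' hmatch, zero_mulVec, dotProduct_zero, Pi.zero_apply]

end Matching

theorem statement0 {n : ℕ} (U : Set (Fin n → ℝ)) (hU : IsOpen U)
    (g gh lam P : (Fin n → ℝ) → Matrix (Fin n) (Fin n) ℝ)
    -- smoothness of all the fields on `U`
    (hgsm : ∀ i j, ContDiffOn ℝ (⊤ : ℕ∞) (fun x => g x i j) U)
    (hghsm : ∀ i j, ContDiffOn ℝ (⊤ : ℕ∞) (fun x => gh x i j) U)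
    (hlamsm : ∀ i j, ContDiffOn ℝ (⊤ : ℕ∞) (fun x => lam x i j) U)
    (hPsm : ∀ i j, ContDiffOn ℝ (⊤ : ℕ∞) (fun x => P x i j) U)
    -- `g` and `ĝ` are metrics (symmetric positive definite)
    (hgpos : ∀ x ∈ U, (g x).PosDef)
    (hghpos : ∀ x ∈ U, (gh x).PosDef)
    -- `g = ĝ λ`
    (hglam : ∀ x ∈ U, g x = gh x * lam x)
    -- `P` is a `g`-orthogonal projection
    (hPP : ∀ x ∈ U, P x * P x = P x)
    (hPsym : ∀ x ∈ U, (g x * P x)ᵀ = g x * P x)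
    -- kinetic-energy matching condition `P(∇_X X − ∇̂_X X) = 0` for all smooth `X`
    (hmatch : ∀ X : (Fin n → ℝ) → Fin n → ℝ,
      (∀ k, ContDiffOn ℝ (⊤ : ℕ∞) (fun x => X x k) U) →
      ∀ x ∈ U, ∀ i, (∑ j, P x i j * (covDeriv' g X X x j - covDeriv' gh X X x j)) = 0) :
    ∀ X Z : (Fin n → ℝ) → Fin n → ℝ,
      (∀ k, ContDiffOn ℝ (⊤ : ℕ∞) (fun x => X x k) U) →
      (∀ k, ContDiffOn ℝ (⊤ : ℕ∞) (fun x => Z x k) U) →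
      ∀ x ∈ U,
        gip g (covDeriv' g Z (mvec lam (mvec P X))) (mvec P X) x -
          gip g (mvec lam (mvec P X)) (covDeriv' g Z (mvec P X)) x = 0 := by
  intro X Z hX _ x hx
  have hxU : U ∈ nhds x := hU.mem_nhds hx
  have hdiff {f : (Fin n → ℝ) → ℝ} (hf : ContDiffOn ℝ (⊤ : ℕ∞) f U) : DifferentiableAt ℝ f x :=
    (hf.differentiableOn (by simp)).differentiableAt hxU
  have hsymm : ∀ᶠ y in nhds x, (g y).IsSymm :=
    Filter.eventually_of_mem hxU fun y hy => isHermitian_iff_isSymm.1 (hgpos y hy).isHermitian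
  have hsymm' : ∀ᶠ y in nhds x, (gh y).IsSymm :=
    Filter.eventually_of_mem hxU fun y hy => isHermitian_iff_isSymm.1 (hghpos y hy).isHermitian
  have hY := contDiffOn_mvec hPsm hX
  have hW (k : Fin n) : DifferentiableAt ℝ (fun y => mvec lam (mvec P X) y k) x :=
    hdiff (contDiffOn_mvec hlamsm hY k)
  have hcompat := gip_covDeriv'_add_gip_covDeriv' hsymm
    ((isUnit_iff_isUnit_det _).1 (hgpos x hx).isUnit) (fun i j => hdiff (hgsm i j)) hW
    (fun k => hdiff (hY k)) Z
  have hcompat' := gip_covDeriv'_add_gip_covDeriv' hsymm'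
    ((isUnit_iff_isUnit_det _).1 (hghpos x hx).isUnit) (fun i j => hdiff (hghsm i j)) hW hW Z
  have hF : gip g (mvec lam (mvec P X)) (mvec P X) =ᶠ[nhds x]
      gip gh (mvec lam (mvec P X)) (mvec lam (mvec P X)) :=
    Filter.eventually_of_mem hxU fun y hy => gip_eq_gip_mvec (hglam y hy) _ _
  simp only [pderiv'_congr hF] at hcompat
  have hproj := mulVec_covDeriv'_eq_of_matching hsymm hsymm'
    (fun v => funext fun i => hmatch (fun _ => v) (fun _ => contDiffOn_const) x hx i)
    Z (mvec lam (mvec P X))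
  rw [gip_comm hsymm'.self_of_nhds (mvec lam (mvec P X)),
    gip_mvec_eq_of_proj (hglam x hx) (hPP x hx) (hPsym x hx) hproj.symm] at hcompat'
  linarith
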